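/- arXiv:2411.15054 — 2 statements merged into one kernel-verified Lean document; each statement's English description precedes it below -/
import Mathlib

section
/- Let a > 0 and let ψ: [−a,a] → ℝ be twice continuously differentiable with ψ(±a) = 0, ψ ≥ 0, ∫_{−a}^{a} ψ = 1, and suppose ψ'' + (α − Q)ψ = 0 on (−a,a) where Q is continuous with |Q| ≤ M and α ∈ ℝ. Then for each integer r ≥ 1, |∫_{−a}^{a} ψ(y) cos(2rπy) dy| ≤ min(1, (M + |α|)/(2r²π²)). -/
/-!
The bound `1` holds because `ψ` is a probability density and `|cos| ≤ 1`. For the other bound, put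
`k = 2rπ` and `φ(y) = cos(ka) - cos(ky)`. Both `ψ` and `φ` vanish at `±a`, so integrating by parts
twice moves both derivatives from `φ` onto `ψ`: `k² ∫ ψ cos(ky) = ∫ ψ'' φ`. By the equation,
`|ψ''| = |Q - α| ψ ≤ (M + |α|) ψ`, and `|φ| ≤ 2`, so `k² |∫ ψ cos(ky)| ≤ 2(M + |α|)`.
-/

open MeasureTheory Real Set intervalIntegral
open scoped Interval

theorem abs_integral_le_of_abs_le_mul_density {f ψ : ℝ → ℝ} {a b C : ℝ} (hab : a ≤ b)
    (hψ : IntervalIntegrable ψ volume a b) (hnorm : ∫ x in a..b, ψ x = 1)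
    (hf : ∀ x ∈ Ioo a b, |f x| ≤ C * ψ x) :
    |∫ x in a..b, f x| ≤ C := by
  have hae : ∀ᵐ x ∂volume, x ∈ Ioc a b → ‖f x‖ ≤ C * ψ x := by
    filter_upwards [Ioo_ae_eq_Ioc] with x hx hmem
    exact hf x (hx.mpr hmem)
  simpa [intervalIntegral.integral_const_mul, hnorm] using
    norm_integral_le_of_norm_le hab hae (hψ.const_mul C)

theorem integral_deriv2_mul_eq_mul_deriv2 {f f' f'' g g' g'' : ℝ → ℝ} {a b : ℝ}
    (hf : ∀ x ∈ [[a, b]], HasDerivWithinAt f (f' x) [[a, b]] x)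
    (hf' : ∀ x ∈ [[a, b]], HasDerivWithinAt f' (f'' x) [[a, b]] x)
    (hg : ∀ x ∈ [[a, b]], HasDerivWithinAt g (g' x) [[a, b]] x)
    (hg' : ∀ x ∈ [[a, b]], HasDerivWithinAt g' (g'' x) [[a, b]] x)
    (hf''int : IntervalIntegrable f'' volume a b) (hg''int : IntervalIntegrable g'' volume a b)
    (hfa : f a = 0) (hfb : f b = 0) (hga : g a = 0) (hgb : g b = 0) :
    ∫ x in a..b, f'' x * g x = ∫ x in a..b, f x * g'' x := by
  have hf'int : IntervalIntegrable f' volume a b :=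
    ContinuousOn.intervalIntegrable fun x hx ↦ (hf' x hx).continuousWithinAt
  have hg'int : IntervalIntegrable g' volume a b :=
    ContinuousOn.intervalIntegrable fun x hx ↦ (hg' x hx).continuousWithinAt
  rw [integral_mul_deriv_eq_deriv_mul_of_hasDerivWithinAt hf hg' hf'int hg''int,
    integral_mul_deriv_eq_deriv_mul_of_hasDerivWithinAt hf' hg hf''int hg'int, hfa, hfb, hga, hgb]
  ring

theorem hasDerivAt_cos_mul (k x : ℝ) :
    HasDerivAt (fun y ↦ cos (k * y)) (-(k * sin (k * x))) x := by
  simpa [mul_comm] using ((hasDerivAt_id x).const_mul k).cos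

theorem hasDerivAt_sin_mul (k x : ℝ) :
    HasDerivAt (fun y ↦ sin (k * y)) (k * cos (k * x)) x := by
  simpa [mul_comm] using ((hasDerivAt_id x).const_mul k).sin

theorem sq_mul_integral_mul_cos_eq {ψ ψ' ψ'' : ℝ → ℝ} {a : ℝ} (k : ℝ)
    (hψ : ∀ x ∈ [[-a, a]], HasDerivWithinAt ψ (ψ' x) [[-a, a]] x)
    (hψ' : ∀ x ∈ [[-a, a]], HasDerivWithinAt ψ' (ψ'' x) [[-a, a]] x)
    (hψ''int : IntervalIntegrable ψ'' volume (-a) a)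
    (hψ_left : ψ (-a) = 0) (hψ_right : ψ a = 0) :
    k ^ 2 * ∫ y in (-a)..a, ψ y * cos (k * y) =
      ∫ y in (-a)..a, ψ'' y * (cos (k * a) - cos (k * y)) := by
  have hgreen := integral_deriv2_mul_eq_mul_deriv2 hψ hψ'
    (g := fun y ↦ cos (k * y) - cos (k * a)) (g'' := fun y ↦ -(k * (k * cos (k * y))))
    (fun x _ ↦ ((hasDerivAt_cos_mul k x).sub_const _).hasDerivWithinAt)
    (fun x _ ↦ ((hasDerivAt_sin_mul k x).const_mul k).neg.hasDerivWithinAt) hψ''int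
    (by apply Continuous.intervalIntegrable; fun_prop) hψ_left hψ_right
    (by simp [mul_neg]) (by simp)
  calc k ^ 2 * ∫ y in (-a)..a, ψ y * cos (k * y)
      = -∫ y in (-a)..a, ψ y * -(k * (k * cos (k * y))) := by
        rw [← intervalIntegral.integral_const_mul, ← intervalIntegral.integral_neg]
        congr 1; ext y; ring
    _ = ∫ y in (-a)..a, ψ'' y * (cos (k * a) - cos (k * y)) := by
        rw [← hgreen, ← intervalIntegral.integral_neg]
        congr 1; ext y; ring

theorem abs_integral_mul_cos_le_one {ψ : ℝ → ℝ} {a b : ℝ} (hab : a ≤ b)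
    (hψ : IntervalIntegrable ψ volume a b) (hpos : ∀ x ∈ Ioo a b, 0 ≤ ψ x)
    (hnorm : ∫ x in a..b, ψ x = 1) (k : ℝ) :
    |∫ y in a..b, ψ y * cos (k * y)| ≤ 1 :=
  abs_integral_le_of_abs_le_mul_density hab hψ hnorm fun x hx ↦ by
    rw [abs_mul, abs_of_nonneg (hpos x hx), one_mul]
    exact mul_le_of_le_one_right (hpos x hx) (abs_cos_le_one _)

theorem abs_sq_mul_integral_mul_cos_le {ψ : ℝ → ℝ} {a C : ℝ} (ha : 0 < a)
    (hψ : ContDiffOn ℝ 2 ψ (Icc (-a) a)) (hψ_left : ψ (-a) = 0) (hψ_right : ψ a = 0)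
    (hnorm : ∫ y in (-a)..a, ψ y = 1)
    (hψ'' : ∀ x ∈ Ioo (-a) a,
      |derivWithin (derivWithin ψ (Icc (-a) a)) (Icc (-a) a) x| ≤ C * ψ x) (k : ℝ) :
    |k ^ 2 * ∫ y in (-a)..a, ψ y * cos (k * y)| ≤ 2 * C := by
  have hI : [[-a, a]] = Icc (-a) a := uIcc_of_le (by linarith)
  have hIcc : UniqueDiffOn ℝ (Icc (-a) a) := uniqueDiffOn_Icc (by linarith)
  have hψ' : ContDiffOn ℝ 1 (derivWithin ψ (Icc (-a) a)) (Icc (-a) a) :=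
    hψ.derivWithin hIcc (by norm_num)
  rw [sq_mul_integral_mul_cos_eq k
    (by rw [hI]; exact fun x hx ↦ (hψ.differentiableOn (by norm_num) x hx).hasDerivWithinAt)
    (by rw [hI]; exact fun x hx ↦ (hψ'.differentiableOn (by norm_num) x hx).hasDerivWithinAt)
    ((hψ'.continuousOn_derivWithin hIcc le_rfl).intervalIntegrable_of_Icc (by linarith))
    hψ_left hψ_right]
  refine abs_integral_le_of_abs_le_mul_density (by linarith)
    (hψ.continuousOn.intervalIntegrable_of_Icc (by linarith)) hnorm fun x hx ↦ ?_
  have hcos : |cos (k * a) - cos (k * x)| ≤ 2 :=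
    (abs_sub _ _).trans (by linarith [abs_cos_le_one (k * a), abs_cos_le_one (k * x)])
  calc _ ≤ C * ψ x * 2 := by
        rw [abs_mul]
        exact mul_le_mul (hψ'' x hx) hcos (abs_nonneg _) ((abs_nonneg _).trans (hψ'' x hx))
    _ = 2 * C * ψ x := by ring

theorem stmt8_general (a : ℝ) (ha : 0 < a) (psi Q : ℝ → ℝ) (M alpha : ℝ)
    (hpsi : ContDiffOn ℝ 2 psi (Set.Icc (-a) a))
    (hbda : psi (-a) = 0) (hbdb : psi a = 0)
    (hpos : ∀ x ∈ Set.Icc (-a) a, 0 ≤ psi x)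
    (hnorm : ∫ y in (-a)..a, psi y = 1)
    (hQbd : ∀ x ∈ Set.Icc (-a) a, |Q x| ≤ M)
    (hODE : ∀ x ∈ Set.Ioo (-a) a,
      derivWithin (derivWithin psi (Set.Icc (-a) a)) (Set.Icc (-a) a) x =
        (Q x - alpha) * psi x) :
    ∀ r : ℕ, 1 ≤ r →
      |∫ y in (-a)..a, psi y * Real.cos (2*(r:ℝ)*π*y)| ≤
        min 1 ((M + |alpha|) / (2*(r:ℝ)^2*π^2)) := by
  intro r hr
  have hpos' : ∀ x ∈ Ioo (-a) a, 0 ≤ psi x := fun x hx ↦ hpos x (Ioo_subset_Icc_self hx)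
  have hψ'' : ∀ x ∈ Ioo (-a) a,
      |derivWithin (derivWithin psi (Icc (-a) a)) (Icc (-a) a) x| ≤ (M + |alpha|) * psi x := by
    intro x hx
    rw [hODE x hx, abs_mul, abs_of_nonneg (hpos' x hx)]
    exact mul_le_mul_of_nonneg_right
      ((abs_sub _ _).trans (by linarith [hQbd x (Ioo_subset_Icc_self hx)])) (hpos' x hx)
  have hk : (0 : ℝ) < (2 * r * π) ^ 2 := by
    have : (0 : ℝ) < r := by exact_mod_cast hr
    positivity
  have hsq := abs_sq_mul_integral_mul_cos_le ha hpsi hbda hbdb hnorm hψ'' (2 * r * π)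
  rw [abs_mul, abs_of_pos hk, ← le_div_iff₀' hk] at hsq
  refine le_min (abs_integral_mul_cos_le_one (by linarith)
    (hpsi.continuousOn.intervalIntegrable_of_Icc (by linarith)) hpos' hnorm _) ?_
  convert hsq using 1
  field_simp

theorem stmt8 (a : ℝ) (ha : 0 < a) (psi Q : ℝ → ℝ) (M alpha : ℝ)
    (hpsi : ContDiffOn ℝ 2 psi (Set.Icc (-a) a))
    (hbda : psi (-a) = 0) (hbdb : psi a = 0)
    (hpos : ∀ x ∈ Set.Icc (-a) a, 0 ≤ psi x)
    (hnorm : ∫ y in (-a)..a, psi y = 1)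
    (hQ : ContinuousOn Q (Set.Icc (-a) a))
    (hQbd : ∀ x ∈ Set.Icc (-a) a, |Q x| ≤ M)
    (hODE : ∀ x ∈ Set.Ioo (-a) a,
      derivWithin (derivWithin psi (Set.Icc (-a) a)) (Set.Icc (-a) a) x =
        (Q x - alpha) * psi x) :
    ∀ r : ℕ, 1 ≤ r →
      |∫ y in (-a)..a, psi y * Real.cos (2*(r:ℝ)*π*y)| ≤
        min 1 ((M + |alpha|) / (2*(r:ℝ)^2*π^2)) :=
  stmt8_general a ha psi Q M alpha hpsi hbda hbdb hpos hnorm hQbd hODE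
end

section
/- For the kernel φ(y) = (1 + ε̄ cos(2πy)) 𝟙_{|y|≤1/2}(y) with 0 ≤ ε̄ < 3/4, the neutral curve D₀(λ, ε̄) = −(λ³/(4π³)) (1 − ε̄/(1−λ²)) sin(π/λ) is positive for λ ∈ (1/2, √(1−ε̄)), and D₀(λ,ε̄) → 0 as λ → √(1−ε̄)⁻; in particular the maximal wavelength in the first tongue is λ_max(ε̄) = √(1−ε̄). -/
/-! On `(1/2, √(1 - ε̄))` the three factors of `D₀` have fixed signs: `λ³ > 0`, `sin (π/λ) < 0`
because `π/λ ∈ (π, 2π)`, and `1 - ε̄/(1 - λ²) > 0` because `λ² < 1 - ε̄`. At `λ = √(1 - ε̄)` the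
middle factor vanishes (for `ε̄ = 0` it is `1`, but then `sin (π/λ) = sin π = 0`), and `D₀` is
continuous there, so it tends to `0`. -/

open MeasureTheory Real Filter
open scoped Real

noncomputable def neutralCurve (eps lam : ℝ) : ℝ :=
  -(lam ^ 3 / (4 * π ^ 3)) * (1 - eps / (1 - lam ^ 2)) * sin (π / lam)

lemma sin_pi_div_neg {x : ℝ} (hx₁ : 1 / 2 < x) (hx₂ : x < 1) : sin (π / x) < 0 := by
  have hx₀ : 0 < x := by linarith
  have h_lower : π < π / x := by rw [lt_div_iff₀ hx₀]; nlinarith [pi_pos]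
  have h_upper : π / x < 2 * π := by rw [div_lt_iff₀ hx₀]; nlinarith [pi_pos]
  rw [← sin_sub_two_pi]
  exact sin_neg_of_neg_of_neg_pi_lt (by linarith) (by linarith)

lemma one_sub_div_one_sub_sq_pos {eps x : ℝ} (heps : 0 ≤ eps) (hx : x ^ 2 < 1 - eps) :
    0 < 1 - eps / (1 - x ^ 2) := by
  have hden : 0 < 1 - x ^ 2 := by linarith
  have : eps / (1 - x ^ 2) < 1 := (div_lt_one hden).mpr (by linarith)
  linarith

lemma neutralCurve_pos {eps lam : ℝ} (heps : 0 ≤ eps)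
    (hlam : lam ∈ Set.Ioo (1 / 2 : ℝ) (√(1 - eps))) : 0 < neutralCurve eps lam := by
  obtain ⟨hlo, hhi⟩ := hlam
  have hsq : lam ^ 2 < 1 - eps := (lt_sqrt (by linarith)).mp hhi
  have hlam₁ : lam < 1 := by nlinarith
  have hA : 0 < lam ^ 3 / (4 * π ^ 3) := by positivity
  calc 0 < lam ^ 3 / (4 * π ^ 3) * (1 - eps / (1 - lam ^ 2)) * -sin (π / lam) :=
        mul_pos (mul_pos hA (one_sub_div_one_sub_sq_pos heps hsq))
          (neg_pos.mpr (sin_pi_div_neg hlo hlam₁))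
    _ = neutralCurve eps lam := by unfold neutralCurve; ring

lemma neutralCurve_sqrt_eq_zero (eps : ℝ) : neutralCurve eps (√(1 - eps)) = 0 := by
  unfold neutralCurve
  rcases lt_or_ge 1 eps with h | h
  · simp [sqrt_eq_zero'.mpr (by linarith : 1 - eps ≤ 0)]
  rw [sq_sqrt (by linarith), sub_sub_cancel]
  rcases eq_or_ne eps 0 with rfl | h₀
  · simp
  · simp [div_self h₀]

lemma continuousAt_neutralCurve_sqrt {eps : ℝ} (h : eps < 1) :
    ContinuousAt (neutralCurve eps) (√(1 - eps)) := by
  have ha : 0 < √(1 - eps) := sqrt_pos.mpr (by linarith)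
  have hfactor : ContinuousAt (fun lam : ℝ => 1 - eps / (1 - lam ^ 2)) (√(1 - eps)) := by
    rcases eq_or_ne eps 0 with rfl | h₀
    · simpa using continuousAt_const
    · refine continuousAt_const.sub (continuousAt_const.div (by fun_prop) ?_)
      rwa [sq_sqrt (by linarith), sub_sub_cancel]
  have hsin : ContinuousAt (fun lam : ℝ => sin (π / lam)) (√(1 - eps)) :=
    continuous_sin.continuousAt.comp (continuousAt_const.div continuousAt_id ha.ne')
  exact ((by fun_prop : Continuous fun lam : ℝ => -(lam ^ 3 / (4 * π ^ 3))).continuousAt.mul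
    hfactor).mul hsin

lemma tendsto_neutralCurve_sqrt {eps : ℝ} (h : eps < 1) :
    Tendsto (neutralCurve eps) (nhds (√(1 - eps))) (nhds 0) :=
  neutralCurve_sqrt_eq_zero eps ▸ continuousAt_neutralCurve_sqrt h

theorem stmt18 (eps : ℝ) (heps : eps ∈ Set.Ico (0:ℝ) (3/4)) :
    (∀ lam ∈ Set.Ioo (1/2 : ℝ) (Real.sqrt (1 - eps)),
      0 < -(lam^3/(4*π^3)) * (1 - eps/(1 - lam^2)) * Real.sin (π/lam)) ∧
    Tendsto (fun lam : ℝ => -(lam^3/(4*π^3)) * (1 - eps/(1 - lam^2)) * Real.sin (π/lam))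
      (nhdsWithin (Real.sqrt (1 - eps)) (Set.Iio (Real.sqrt (1 - eps))))
      (nhds 0) :=
  ⟨fun _ hlam => neutralCurve_pos heps.1 hlam,
    (tendsto_neutralCurve_sqrt (by linarith [heps.2])).mono_left nhdsWithin_le_nhds⟩
end
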